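/- Let n ≥ 1 and let P be the path graph with vertex set {v_0, v_1, …, v_n} and edges v_i v_{i+1} for 0 ≤ i < n. Fix any j ∈ ℤ. Then the number of pairs (A, g) with A ⊆ {v_0, …, v_n}, v_0 ∉ A, g : A ∪ {v_0} → ℤ, g(v_0) = j, such that (A, g restricted to A) is a partial bucket function on P and there exists a bucket extension f̄ of g restricted to A with f̄(v_0) = j, is at most 3 · 4.383^{n−1}. -/

import Mathlib

/-!
A prototype `(A, g)` has a least bucket extension `f`, the envelope
`v ↦ max_{a ∈ A ∪ {v₀}} (g a - |v - a|)`. For each edge `v_{i-1} v_i` record whether `v_i ∈ A`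
and the sign of `f v_i - f v_{i-1}`. As `f v₀ = j`, the increments of `f` lie in `{-1, 0, 1}` and
`g = f` on `A ∪ {v₀}`, this word of length `n` over a six-letter alphabet determines `(A, g)`.
The bucket condition (`f` does not increase when leaving `A`) and the minimality of `f` (off
`A ∪ {v₀}` it has a neighbour one unit higher) make the word a run of a small automaton, and a
positive weight vector `w` with `T w ≤ 4.383 w` for its transfer matrix `T` bounds the number of
runs.
-/

/-- `fbar : V → ℤ` is a bucket extension of `f` (given on `A`). -/
def IsBucketExtension {V : Type*} (G : SimpleGraph V) (A : Set V) (f fbar : V → ℤ) : Prop :=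
  (∀ v ∈ A, fbar v = f v) ∧
  (∀ u v, G.Adj u v → |fbar u - fbar v| ≤ 1) ∧
  (∀ u v, G.Adj u v → u ∈ A → v ∉ A → fbar v ≤ fbar u)

/-- Prototypes `(A, g)` w.r.t. `B = {v_0}` on the path `v_0 v_1 ⋯ v_n` with `v_0 ∉ A` and
`g(v_0) = j`: pairs with `g : A ∪ {v_0} → ℤ` (encoded by `g` vanishing outside `A ∪ {v_0}`)
such that `(A, g|_A)` is a partial bucket function with a bucket extension `f̄` satisfying
`f̄(v_0) = j`. -/
def pathProtos (n : ℕ) (j : ℤ) : Set (Finset (Fin (n + 1)) × (Fin (n + 1) → ℤ)) :=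
  {p | (∀ v ∉ insert (0 : Fin (n + 1)) p.1, p.2 v = 0) ∧ (0 : Fin (n + 1)) ∉ p.1 ∧
       p.2 0 = j ∧
       ∃ fbar, IsBucketExtension (SimpleGraph.pathGraph (n + 1)) ↑p.1 p.2 fbar ∧
         fbar 0 = j}

open Finset SimpleGraph

section Runs

variable {α : Type*} [Fintype α] (start : α → Prop) (step : α → α → Prop)

def IsRun {m : ℕ} (φ : Fin (m + 1) → α) : Prop :=
  start (φ 0) ∧ ∀ i : Fin m, step (φ i.castSucc) (φ i.succ)

open Classical in
noncomputable def runsEndingAt (m : ℕ) (t : α) : Finset (Fin (m + 1) → α) :=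
  {φ | IsRun start step φ ∧ φ (Fin.last m) = t}

variable {start step}

lemma mem_runsEndingAt {m : ℕ} {t : α} {φ : Fin (m + 1) → α} :
    φ ∈ runsEndingAt start step m t ↔ IsRun start step φ ∧ φ (Fin.last m) = t := by
  simp [runsEndingAt]

lemma card_runsEndingAt_zero_le [DecidablePred start] (t : α) :
    #(runsEndingAt start step 0 t) ≤ if start t then 1 else 0 := by
  have hsub : runsEndingAt start step 0 t ⊆ if start t then {fun _ ↦ t} else ∅ := by
    intro φ hφ
    obtain ⟨⟨hstart, -⟩, hlast⟩ := mem_runsEndingAt.mp hφ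
    have hconst : φ = fun _ ↦ t := funext fun i ↦ by
      rw [Subsingleton.elim (α := Fin 1) i (Fin.last 0), hlast]
    subst hconst
    simp [hstart]
  refine (card_le_card hsub).trans ?_
  split_ifs <;> simp

lemma card_runsEndingAt_succ_le [DecidableRel step] (m : ℕ) (t : α) :
    #(runsEndingAt start step (m + 1) t) ≤
      ∑ s, if step s t then #(runsEndingAt start step m s) else 0 := by
  classical
  have hmaps : ∀ φ ∈ runsEndingAt start step (m + 1) t,
      Fin.init φ ∈ ({s | step s t} : Finset α).biUnion (runsEndingAt start step m) := by
    intro φ hφ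
    obtain ⟨⟨hstart, hstep⟩, hlast⟩ := mem_runsEndingAt.mp hφ
    refine mem_biUnion.mpr ⟨φ (Fin.last m).castSucc, ?_, mem_runsEndingAt.mpr ⟨⟨hstart, ?_⟩, rfl⟩⟩
    · rw [← hlast, ← Fin.succ_last]; exact mem_filter.mpr ⟨mem_univ _, hstep (Fin.last m)⟩
    · intro i
      show step (φ i.castSucc.castSucc) (φ i.succ.castSucc)
      rw [← Fin.succ_castSucc]; exact hstep i.castSucc
  have hinj : Set.InjOn Fin.init (runsEndingAt start step (m + 1) t : Set (Fin (m + 2) → α)) := by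
    intro φ hφ ψ hψ h
    rw [← Fin.snoc_init_self φ, ← Fin.snoc_init_self ψ, h, (mem_runsEndingAt.mp hφ).2,
      (mem_runsEndingAt.mp hψ).2]
  calc #(runsEndingAt start step (m + 1) t)
      ≤ #(({s | step s t} : Finset α).biUnion (runsEndingAt start step m)) :=
        card_le_card_of_injOn _ hmaps hinj
    _ ≤ ∑ s ∈ {s | step s t}, #(runsEndingAt start step m s) := card_biUnion_le
    _ = _ := sum_filter _ _

lemma sum_card_runsEndingAt_zero_mul_le [DecidablePred start] {v : α → ℝ} (hv : 0 ≤ v) :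
    ∑ t, (#(runsEndingAt start step 0 t) : ℝ) * v t ≤ ∑ t, if start t then v t else 0 := by
  gcongr with t
  calc (#(runsEndingAt start step 0 t) : ℝ) * v t ≤ (if start t then 1 else 0) * v t := by
        gcongr
        · exact hv t
        · exact_mod_cast card_runsEndingAt_zero_le t
    _ = _ := by rw [ite_mul, one_mul, zero_mul]

lemma sum_card_runsEndingAt_succ_mul_le [DecidableRel step] (m : ℕ) {v : α → ℝ} (hv : 0 ≤ v) :
    ∑ t, (#(runsEndingAt start step (m + 1) t) : ℝ) * v t ≤
      ∑ s, (#(runsEndingAt start step m s) : ℝ) * ∑ t, if step s t then v t else 0 :=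
  calc ∑ t, (#(runsEndingAt start step (m + 1) t) : ℝ) * v t
      ≤ ∑ t, (∑ s, if step s t then (#(runsEndingAt start step m s) : ℝ) else 0) * v t := by
        gcongr with t
        · exact hv t
        · exact_mod_cast card_runsEndingAt_succ_le m t
    _ = _ := by
        simp_rw [sum_mul, mul_sum, ite_mul, mul_ite, zero_mul, mul_zero]
        exact sum_comm

lemma sum_card_runsEndingAt_mul_le_pow [DecidablePred start] [DecidableRel step] {w : α → ℝ}
    (hw : 0 ≤ w) {r : ℝ} (hr : 0 ≤ r) (hstep : ∀ s, ∑ t, (if step s t then w t else 0) ≤ r * w s)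
    (m : ℕ) :
    ∑ t, (#(runsEndingAt start step m t) : ℝ) * w t ≤ r ^ m * ∑ t, if start t then w t else 0 := by
  induction m with
  | zero => simpa using sum_card_runsEndingAt_zero_mul_le hw
  | succ m ih =>
    calc ∑ t, (#(runsEndingAt start step (m + 1) t) : ℝ) * w t
        ≤ ∑ s, (#(runsEndingAt start step m s) : ℝ) * (r * w s) := by
          refine (sum_card_runsEndingAt_succ_mul_le m hw).trans ?_
          gcongr with s
          exact hstep s
      _ = r * ∑ s, (#(runsEndingAt start step m s) : ℝ) * w s := by
          rw [mul_sum]; exact sum_congr rfl fun s _ ↦ by ring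
      _ ≤ r * (r ^ m * ∑ t, if start t then w t else 0) := by gcongr
      _ = _ := by ring

end Runs

section PathEnvelope

variable {N : ℕ}

lemma pathGraph_adj_castSucc_succ (i : Fin N) : (pathGraph (N + 1)).Adj i.castSucc i.succ :=
  pathGraph_adj.mpr (Or.inl (by simp))

lemma abs_sub_le_of_pathGraph {f : Fin (N + 1) → ℤ}
    (hf : ∀ u v, (pathGraph (N + 1)).Adj u v → |f u - f v| ≤ 1) (a b : Fin (N + 1)) :
    |f a - f b| ≤ |(a : ℤ) - b| := by
  have hstep (i : Fin N) : |f i.succ - f i.castSucc| ≤ 1 :=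
    hf _ _ (pathGraph_adj_castSucc_succ i).symm
  -- `f` is 1-Lipschitz iff `f + id` and `id - f` are both monotone
  have hup : Monotone fun i : Fin (N + 1) ↦ f i + i := Fin.monotone_iff_le_succ.mpr fun i ↦ by
    have := (abs_le.mp (hstep i)).1; simp; omega
  have hdown : Monotone fun i : Fin (N + 1) ↦ (i : ℤ) - f i :=
    Fin.monotone_iff_le_succ.mpr fun i ↦ by have := (abs_le.mp (hstep i)).2; simp; omega
  wlog hab : a ≤ b generalizing a b
  · rw [abs_sub_comm, abs_sub_comm (a : ℤ)]
    exact this b a (le_of_not_ge hab)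
  have h1 := hup hab
  have h2 := hdown hab
  simp only at h1 h2
  rw [abs_le, abs_of_nonpos (by omega)]
  constructor <;> omega

def envelope (S : Finset (Fin N)) (hS : S.Nonempty) (g : Fin N → ℤ) (v : Fin N) : ℤ :=
  S.sup' hS fun a ↦ g a - |(v : ℤ) - a|

variable {S : Finset (Fin N)} {hS : S.Nonempty} {g : Fin N → ℤ}

lemma le_envelope {a : Fin N} (ha : a ∈ S) (v : Fin N) :
    g a - |(v : ℤ) - a| ≤ envelope S hS g v :=
  le_sup' (fun a ↦ g a - |(v : ℤ) - a|) ha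

lemma envelope_le {F : Fin N → ℤ} (hF : ∀ a b, |F a - F b| ≤ |(a : ℤ) - b|)
    (hFg : ∀ a ∈ S, F a = g a) (v : Fin N) : envelope S hS g v ≤ F v := by
  refine sup'_le _ _ fun a ha ↦ ?_
  have := (abs_le.mp (hF a v)).2
  rw [← hFg a ha, abs_sub_comm]
  omega

lemma envelope_eq_of_mem {F : Fin N → ℤ} (hF : ∀ a b, |F a - F b| ≤ |(a : ℤ) - b|)
    (hFg : ∀ a ∈ S, F a = g a) {a : Fin N} (ha : a ∈ S) : envelope S hS g a = g a :=
  le_antisymm (hFg a ha ▸ envelope_le hF hFg a) (by simpa using le_envelope (hS := hS) ha a)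

lemma envelope_sub_le (u v : Fin N) :
    envelope S hS g u - envelope S hS g v ≤ |(u : ℤ) - v| := by
  refine sub_le_iff_le_add.mpr (sup'_le _ _ fun a ha ↦ ?_)
  have h1 := le_envelope (g := g) (hS := hS) ha v
  have h2 := abs_sub_le (v : ℤ) u a
  rw [abs_sub_comm (v : ℤ) u] at h2
  linarith

lemma abs_envelope_sub_le_one {u v : Fin N} (huv : (pathGraph N).Adj u v) :
    |envelope S hS g u - envelope S hS g v| ≤ 1 := by
  have hdist : |(u : ℤ) - v| = 1 := by
    rcases pathGraph_adj.mp huv with h | h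
    · rw [abs_of_neg (by omega)]; omega
    · rw [abs_of_pos (by omega)]; omega
  have h1 := envelope_sub_le (hS := hS) (g := g) u v
  have h2 := envelope_sub_le (hS := hS) (g := g) v u
  rw [abs_sub_comm, hdist] at h2
  rw [hdist] at h1
  exact abs_le.mpr ⟨by linarith, h1⟩

lemma exists_adj_envelope_add_one_le {v : Fin N} (hv : v ∉ S) :
    ∃ u, (pathGraph N).Adj v u ∧ envelope S hS g v + 1 ≤ envelope S hS g u := by
  obtain ⟨a, ha, hva⟩ := exists_mem_eq_sup' hS fun a ↦ g a - |(v : ℤ) - a|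
  have hav : (a : ℕ) ≠ v := fun h ↦ hv (Fin.ext h ▸ ha)
  rcases Nat.lt_or_gt_of_ne hav with hlt | hgt
  · refine ⟨⟨v - 1, by omega⟩, pathGraph_adj.mpr (Or.inr (by simp; omega)), ?_⟩
    have := le_envelope (g := g) (hS := hS) ha ⟨v - 1, by omega⟩
    rw [envelope, hva, abs_of_pos (by omega)]
    rw [abs_of_nonneg (by simp; omega)] at this
    push_cast [Nat.cast_sub (by omega : 1 ≤ (v : ℕ))] at this
    linarith
  · refine ⟨⟨v + 1, by omega⟩, pathGraph_adj.mpr (Or.inl rfl), ?_⟩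
    have := le_envelope (g := g) (hS := hS) ha ⟨v + 1, by omega⟩
    rw [envelope, hva, abs_of_neg (by omega)]
    rw [abs_of_nonpos (by simp; omega)] at this
    push_cast at this
    linarith

end PathEnvelope

namespace PathProtos

section MinExtension

variable {n : ℕ} {j : ℤ} {p : Finset (Fin (n + 1)) × (Fin (n + 1) → ℤ)}

noncomputable def minExtension (p : Finset (Fin (n + 1)) × (Fin (n + 1) → ℤ)) :
    Fin (n + 1) → ℤ :=
  envelope (insert 0 p.1) (insert_nonempty _ _) p.2

lemma exists_extension_of_mem_pathProtos (hp : p ∈ pathProtos n j) :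
    ∃ F : Fin (n + 1) → ℤ, (∀ a b, |F a - F b| ≤ |(a : ℤ) - b|) ∧
      (∀ a ∈ insert 0 p.1, F a = p.2 a) ∧
      ∀ u v, (pathGraph (n + 1)).Adj u v → u ∈ p.1 → v ∉ p.1 → F v ≤ F u := by
  obtain ⟨-, -, hj, F, ⟨hagree, hlip, hdesc⟩, hF0⟩ := hp
  refine ⟨F, abs_sub_le_of_pathGraph hlip, fun a ha ↦ ?_, fun u v huv hu hv ↦ hdesc u v huv hu hv⟩
  rcases mem_insert.mp ha with rfl | ha
  · rw [hF0, hj]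
  · exact hagree a ha

lemma minExtension_eq_of_mem (hp : p ∈ pathProtos n j) {a : Fin (n + 1)} (ha : a ∈ insert 0 p.1) :
    minExtension p a = p.2 a :=
  have ⟨_, hlip, hagree, _⟩ := exists_extension_of_mem_pathProtos hp
  envelope_eq_of_mem hlip hagree ha

lemma minExtension_zero (hp : p ∈ pathProtos n j) : minExtension p 0 = j := by
  rw [minExtension_eq_of_mem hp (mem_insert_self _ _), hp.2.2.1]

lemma minExtension_le_of_adj (hp : p ∈ pathProtos n j) {u v : Fin (n + 1)}
    (huv : (pathGraph (n + 1)).Adj u v) (hu : u ∈ p.1) (hv : v ∉ p.1) :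
    minExtension p v ≤ minExtension p u := by
  obtain ⟨F, hlip, hagree, hdesc⟩ := exists_extension_of_mem_pathProtos hp
  calc minExtension p v ≤ F v := envelope_le hlip hagree v
    _ ≤ F u := hdesc u v huv hu hv
    _ = minExtension p u := by
      rw [hagree u (mem_insert_of_mem hu), minExtension_eq_of_mem hp (mem_insert_of_mem hu)]

lemma abs_minExtension_sub_le_one {u v : Fin (n + 1)} (huv : (pathGraph (n + 1)).Adj u v) :
    |minExtension p u - minExtension p v| ≤ 1 :=
  abs_envelope_sub_le_one huv

lemma exists_adj_minExtension_add_one_le {v : Fin (n + 1)} (hv : v ∉ insert 0 p.1) :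
    ∃ u, (pathGraph (n + 1)).Adj v u ∧ minExtension p v + 1 ≤ minExtension p u :=
  exists_adj_envelope_add_one_le hv

end MinExtension

abbrev Letter := Bool × SignType

-- `Start`: as `v₀ ∉ A`, the extension cannot descend onto `v₁ ∈ A`. `Step`: it cannot ascend when
-- leaving `A` nor descend when entering `A`, and a vertex outside `A ∪ {v₀}` entered without
-- descending must be left by an ascent. `Accept`: `v_n ∉ A` lies below its only neighbour.
def Start (t : Letter) : Prop := t.1 → t.2 ≠ -1

def Accept (t : Letter) : Prop := t.1 = false → t.2 = -1

def Step (s t : Letter) : Prop :=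
  (s.1 → t.1 = false → t.2 ≠ 1) ∧ (s.1 = false → t.1 → t.2 ≠ -1) ∧
    (s.1 = false → s.2 ≠ -1 → t.2 = 1)

instance : DecidablePred Start := fun _ ↦ inferInstanceAs (Decidable (_ → _))

instance : DecidablePred Accept := fun _ ↦ inferInstanceAs (Decidable (_ → _))

instance : DecidableRel Step := fun _ _ ↦ inferInstanceAs (Decidable (_ ∧ _ ∧ _))

noncomputable def letter {n : ℕ} (p : Finset (Fin (n + 1)) × (Fin (n + 1) → ℤ)) (i : Fin n) :
    Letter :=
  (decide (i.succ ∈ p.1), SignType.sign (minExtension p i.succ - minExtension p i.castSucc))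

section Letters

variable {m : ℕ} {j : ℤ} {p : Finset (Fin (m + 2)) × (Fin (m + 2) → ℤ)}

lemma start_letter_zero (hp : p ∈ pathProtos (m + 1) j) : Start (letter p 0) := by
  intro h1
  simp only [letter, decide_eq_true_eq] at h1
  have := minExtension_le_of_adj hp (pathGraph_adj_castSucc_succ 0).symm h1 hp.2.1
  simp only [letter, Fin.castSucc_zero, ne_eq, sign_eq_neg_one_iff, not_lt, sub_nonneg]
  exact this

lemma step_letter (hp : p ∈ pathProtos (m + 1) j) (i : Fin m) :
    Step (letter p i.castSucc) (letter p i.succ) := by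
  have hxy := pathGraph_adj_castSucc_succ i.castSucc
  have hyz := pathGraph_adj_castSucc_succ i.succ
  simp only [Step, letter, Fin.succ_castSucc, decide_eq_true_eq, decide_eq_false_iff_not, ne_eq,
    sign_eq_one_iff, sign_eq_neg_one_iff, not_lt, sub_nonneg, sub_pos] at hxy ⊢
  refine ⟨fun hy hz ↦ minExtension_le_of_adj hp hyz hy hz,
    fun hy hz ↦ minExtension_le_of_adj hp hyz.symm hz hy, fun hy hxy_le ↦ ?_⟩
  have hy' : i.succ.castSucc ∉ insert 0 p.1 := by
    rw [mem_insert, not_or, ← Fin.succ_castSucc]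
    exact ⟨Fin.succ_ne_zero _, Fin.succ_castSucc i ▸ hy⟩
  obtain ⟨u, hu, hfu⟩ := exists_adj_minExtension_add_one_le hy'
  rcases pathGraph_adj.mp hu with h | h
  · have : u = i.succ.succ := Fin.ext (by simp at h ⊢; omega)
    subst this; exact Int.lt_iff_add_one_le.mpr hfu
  · have : u = i.castSucc.castSucc := Fin.ext (by simp at h ⊢; omega)
    subst this; omega

lemma accept_letter_last (p : Finset (Fin (m + 2)) × (Fin (m + 2) → ℤ)) :
    Accept (letter p (Fin.last m)) := by
  intro hlast
  simp only [letter, decide_eq_false_iff_not] at hlast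
  have hlast' : (Fin.last m).succ ∉ insert 0 p.1 := by
    rw [mem_insert, not_or]
    exact ⟨Fin.succ_ne_zero _, hlast⟩
  obtain ⟨u, hu, hfu⟩ := exists_adj_minExtension_add_one_le hlast'
  have : u = (Fin.last m).castSucc := by
    rcases pathGraph_adj.mp hu with h | h
    · exact absurd u.isLt (by simp at h; omega)
    · exact Fin.ext (by simp at h ⊢; omega)
  subst this
  simp only [letter, sign_eq_neg_one_iff, sub_neg]
  exact Int.lt_iff_add_one_le.mpr hfu

lemma isRun_letter (hp : p ∈ pathProtos (m + 1) j) : IsRun Start Step (letter p) :=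
  ⟨start_letter_zero hp, step_letter hp⟩

lemma coe_sign_eq_self_of_abs_le_one {d : ℤ} (h : |d| ≤ 1) :
    ((SignType.sign d : SignType) : ℤ) = d := by
  obtain rfl | rfl | rfl : d = -1 ∨ d = 0 ∨ d = 1 := by rw [abs_le] at h; omega
  all_goals simp

lemma minExtension_eq_of_letter_eq {q : Finset (Fin (m + 2)) × (Fin (m + 2) → ℤ)}
    (hp : p ∈ pathProtos (m + 1) j) (hq : q ∈ pathProtos (m + 1) j) (h : letter p = letter q) :
    minExtension p = minExtension q := by
  -- the extensions start at `j` and have increments in `{-1, 0, 1}`, recorded by their signs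
  have hincr (r : Finset (Fin (m + 2)) × (Fin (m + 2) → ℤ)) (i : Fin (m + 1)) :
      minExtension r i.succ = minExtension r i.castSucc + (letter r i).2 := by
    dsimp only [letter]
    rw [coe_sign_eq_self_of_abs_le_one
      (abs_minExtension_sub_le_one (pathGraph_adj_castSucc_succ i).symm)]
    ring
  funext v
  induction v using Fin.induction with
  | zero => rw [minExtension_zero hp, minExtension_zero hq]
  | succ i ih => rw [hincr p, hincr q, ih, h]

lemma injOn_letter : Set.InjOn letter (pathProtos (m + 1) j) := by
  intro p hp q hq h
  have hA : p.1 = q.1 := by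
    ext v
    cases v using Fin.cases with
    | zero => simp [hp.2.1, hq.2.1]
    | succ i => simpa [letter] using congrArg Prod.fst (congrFun h i)
  have hf := minExtension_eq_of_letter_eq hp hq h
  refine Prod.ext hA (funext fun v ↦ ?_)
  by_cases hv : v ∈ insert 0 p.1
  · rw [← minExtension_eq_of_mem hp hv, hf, minExtension_eq_of_mem hq (hA ▸ hv)]
  · rw [hp.1 v hv, hq.1 v (hA ▸ hv)]

end Letters

section Weights

-- `T w ≤ 4.383 w` for the transfer matrix `T s t = [Step s t]`, and `T acceptWeight ≤ w`.
def weight (t : Letter) : ℝ := if t.1 then 16 else if t.2 = -1 then 13 else 5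

def acceptIndicator (t : Letter) : ℝ := if Accept t then 1 else 0

def acceptWeight (s : Letter) : ℝ := ∑ t, if Step s t then acceptIndicator t else 0

lemma weight_nonneg : 0 ≤ weight := fun t ↦ by unfold weight; split_ifs <;> norm_num

lemma acceptIndicator_nonneg : 0 ≤ acceptIndicator := fun t ↦ by
  unfold acceptIndicator; split_ifs <;> norm_num

lemma acceptWeight_nonneg : 0 ≤ acceptWeight := fun s ↦
  sum_nonneg fun t _ ↦ by split_ifs <;> [exact acceptIndicator_nonneg t; rfl]

lemma sum_step_weight_le (s : Letter) :
    ∑ t, (if Step s t then weight t else 0) ≤ 4.383 * weight s := by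
  rcases s with ⟨_ | _, _ | _ | _⟩ <;>
    simp [Fintype.sum_prod_type, SignType.univ_eq, Step, weight] <;> norm_num

lemma sum_step_acceptWeight_le (s : Letter) :
    ∑ t, (if Step s t then acceptWeight t else 0) ≤ weight s := by
  rcases s with ⟨_ | _, _ | _ | _⟩ <;>
    simp [Fintype.sum_prod_type, SignType.univ_eq, Step, weight, acceptWeight, acceptIndicator,
      Accept] <;> norm_num

lemma sum_start_weight : ∑ t, (if Start t then weight t else 0) = 55 := by
  simp [Fintype.sum_prod_type, SignType.univ_eq, Start, weight]; norm_num

lemma sum_start_acceptIndicator : ∑ t, (if Start t then acceptIndicator t else 0) = 3 := by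
  simp [Fintype.sum_prod_type, SignType.univ_eq, Start, acceptIndicator, Accept]; norm_num

lemma sum_start_acceptWeight : ∑ t, (if Start t then acceptWeight t else 0) = 13 := by
  simp [Fintype.sum_prod_type, SignType.univ_eq, Start, Step, acceptWeight, acceptIndicator,
    Accept]; norm_num

lemma sum_card_runsEndingAt_mul_acceptIndicator_le (m : ℕ) :
    ∑ t, (#(runsEndingAt Start Step m t) : ℝ) * acceptIndicator t ≤ 3 * 4.383 ^ m := by
  have hback (k : ℕ) :=
    sum_card_runsEndingAt_succ_mul_le (start := Start) (step := Step) k acceptIndicator_nonneg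
  match m with
  | 0 => simpa [sum_start_acceptIndicator] using
      sum_card_runsEndingAt_zero_mul_le (start := Start) (step := Step) acceptIndicator_nonneg
  | 1 =>
    calc _ ≤ ∑ s, (#(runsEndingAt Start Step 0 s) : ℝ) * acceptWeight s := hback 0
      _ ≤ ∑ s, if Start s then acceptWeight s else 0 :=
        sum_card_runsEndingAt_zero_mul_le acceptWeight_nonneg
      _ ≤ 3 * 4.383 ^ 1 := by rw [sum_start_acceptWeight]; norm_num
  | m + 2 =>
    calc _ ≤ ∑ s, (#(runsEndingAt Start Step (m + 1) s) : ℝ) * acceptWeight s := hback (m + 1)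
      _ ≤ ∑ r, (#(runsEndingAt Start Step m r) : ℝ) *
            ∑ s, if Step r s then acceptWeight s else 0 :=
        sum_card_runsEndingAt_succ_mul_le m acceptWeight_nonneg
      _ ≤ ∑ r, (#(runsEndingAt Start Step m r) : ℝ) * weight r := by
        gcongr with r
        exact sum_step_acceptWeight_le r
      _ ≤ 4.383 ^ m * 55 := sum_start_weight ▸
        sum_card_runsEndingAt_mul_le_pow weight_nonneg (by norm_num) sum_step_weight_le m
      _ ≤ 3 * 4.383 ^ (m + 2) := by
        have : (0 : ℝ) ≤ 4.383 ^ m := by positivity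
        rw [pow_add]; nlinarith

noncomputable def acceptedRuns (m : ℕ) : Finset (Fin (m + 1) → Letter) :=
  ({t | Accept t} : Finset Letter).biUnion (runsEndingAt Start Step m)

lemma card_acceptedRuns_le (m : ℕ) : (#(acceptedRuns m) : ℝ) ≤ 3 * 4.383 ^ m :=
  calc (#(acceptedRuns m) : ℝ) ≤ ∑ t ∈ {t | Accept t}, (#(runsEndingAt Start Step m t) : ℝ) := by
        exact_mod_cast card_biUnion_le
    _ = ∑ t, (#(runsEndingAt Start Step m t) : ℝ) * acceptIndicator t := by
        simp [sum_filter, acceptIndicator, mul_ite]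
    _ ≤ 3 * 4.383 ^ m := sum_card_runsEndingAt_mul_acceptIndicator_le m

lemma letter_mem_acceptedRuns {m : ℕ} {j : ℤ} {p : Finset (Fin (m + 2)) × (Fin (m + 2) → ℤ)}
    (hp : p ∈ pathProtos (m + 1) j) : letter p ∈ acceptedRuns m :=
  mem_biUnion.mpr ⟨_, mem_filter.mpr ⟨mem_univ _, accept_letter_last p⟩,
    mem_runsEndingAt.mpr ⟨isRun_letter hp, rfl⟩⟩

end Weights

end PathProtos

/-- on the path with vertices `v_0, …, v_n` (`n ≥ 1`), the number of such
pairs `(A, g)` with `v_0 ∉ A` and `g(v_0) = j` is at most `3 · 4.383^{n-1}`. -/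
theorem path_proto_count (n : ℕ) (hn : 1 ≤ n) (j : ℤ) :
    (pathProtos n j).Finite ∧
    ((pathProtos n j).ncard : ℝ) ≤ 3 * 4.383 ^ (n - 1) := by
  obtain ⟨m, rfl⟩ : ∃ m, n = m + 1 := ⟨n - 1, by omega⟩
  rw [Nat.add_sub_cancel]
  have hmaps : Set.MapsTo PathProtos.letter (pathProtos (m + 1) j) (PathProtos.acceptedRuns m) :=
    fun _ hp ↦ PathProtos.letter_mem_acceptedRuns hp
  have hinj := PathProtos.injOn_letter (m := m) (j := j)
  refine ⟨.of_injOn hmaps hinj (PathProtos.acceptedRuns m).finite_toSet, ?_⟩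
  calc ((pathProtos (m + 1) j).ncard : ℝ) ≤ #(PathProtos.acceptedRuns m) := by
        exact_mod_cast (Set.ncard_le_ncard_of_injOn _ hmaps hinj).trans (Set.ncard_coe_finset _).le
    _ ≤ 3 * 4.383 ^ m := PathProtos.card_acceptedRuns_le m
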